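/- Let u : [0,1] → ℝ be non-increasing with ∫₀¹ u(x) dx = 0, and let φ(t) = 1 − log 2 − log(1 − t) for t ∈ [0, 1/2]. Then ∫₀^{1/2} u(x) φ(x) dx ≥ 0. -/

import Mathlib

open MeasureTheory Real Set

/-
Write `φ = φ(0) + g` with `φ(0) = 1 - log 2 > 0` and `g(x) = -log (1 - x) ≥ 0`, whose integral
over `[0, 1/2]` is `φ(0) / 2`, and let `c = u(1/2)`. Monotonicity gives `∫_{1/2}^1 u ≤ c / 2`,
so the zero mean gives `∫_0^{1/2} u ≥ -c / 2`; and `u ≥ c` on `[0, 1/2]` gives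
`∫_0^{1/2} u g ≥ c φ(0) / 2`. Adding, `∫_0^{1/2} u φ ≥ -φ(0) c / 2 + c φ(0) / 2 = 0`.
-/

namespace AntitoneOn

variable {u g : ℝ → ℝ} {a b : ℝ}

theorem intervalIntegrable_Icc (hu : AntitoneOn u (Icc a b)) (hab : a ≤ b) :
    IntervalIntegrable u volume a b :=
  AntitoneOn.intervalIntegrable (by rwa [uIcc_of_le hab])

theorem intervalIntegral_le_mul (hu : AntitoneOn u (Icc a b)) (hab : a ≤ b) :
    ∫ x in a..b, u x ≤ (b - a) * u a := by
  have hle : ∫ x in a..b, u x ≤ ∫ _ in a..b, u a :=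
    intervalIntegral.integral_mono_on hab (hu.intervalIntegrable_Icc hab) intervalIntegrable_const
      fun x hx ↦ hu (left_mem_Icc.2 hab) hx hx.1
  simpa using hle

theorem mul_intervalIntegral_le (hu : AntitoneOn u (Icc a b)) (hab : a ≤ b)
    (hg : ContinuousOn g (Icc a b)) (hg0 : ∀ x ∈ Icc a b, 0 ≤ g x) :
    u b * ∫ x in a..b, g x ≤ ∫ x in a..b, u x * g x := by
  rw [← uIcc_of_le hab] at hg
  rw [← intervalIntegral.integral_const_mul]
  exact intervalIntegral.integral_mono_on hab (intervalIntegrable_const.mul_continuousOn hg)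
    ((hu.intervalIntegrable_Icc hab).mul_continuousOn hg)
    fun x hx ↦ mul_le_mul_of_nonneg_right (hu hx (right_mem_Icc.2 hab) hx.2) (hg0 x hx)

end AntitoneOn

theorem continuousOn_neg_log_one_sub : ContinuousOn (fun x : ℝ ↦ -log (1 - x)) (Iio 1) :=
  ((continuousOn_const.sub continuousOn_id).log fun _ hx ↦ (sub_pos.2 hx).ne').neg

theorem neg_log_one_sub_nonneg {x : ℝ} (h0 : 0 ≤ x) (h1 : x ≤ 1) : 0 ≤ -log (1 - x) :=
  neg_nonneg.2 <| log_nonpos (sub_nonneg.2 h1) (sub_le_self 1 h0)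

theorem integral_neg_log_one_sub : ∫ x in (0 : ℝ)..(1 / 2), -log (1 - x) = (1 - log 2) / 2 := by
  have hsub : ∫ x in (0 : ℝ)..(1 / 2), log (1 - x) = ∫ x in (1 / 2 : ℝ)..1, log x := by
    rw [intervalIntegral.integral_comp_sub_left (fun x ↦ log x) 1]
    norm_num
  rw [intervalIntegral.integral_neg, hsub, integral_log, one_div, log_inv, log_one]
  ring

/-- key step in the proof of Lemma 3.8. Let `u : [0,1] → ℝ` be
non-increasing with `∫₀¹ u = 0` and let `φ(t) = 1 - log 2 - log(1-t)`. Then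
`∫₀^{1/2} u(x) φ(x) dx ≥ 0`. -/
theorem statement15 (u : ℝ → ℝ) (hu : AntitoneOn u (Set.Icc 0 1))
    (hint : ∫ x in (0:ℝ)..1, u x = 0) :
    0 ≤ ∫ x in (0:ℝ)..(1/2), u x * (1 - Real.log 2 - Real.log (1 - x)) := by
  have hφ0 : 0 < 1 - log 2 := by linarith [log_two_lt_d9]
  have hleft : AntitoneOn u (Icc 0 (1 / 2)) := hu.mono (Icc_subset_Icc le_rfl (by norm_num))
  have hright : AntitoneOn u (Icc (1 / 2) 1) := hu.mono (Icc_subset_Icc (by norm_num) le_rfl)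
  have hu_left := hleft.intervalIntegrable_Icc (by norm_num)
  have hsplit : (∫ x in (0 : ℝ)..(1 / 2), u x) + ∫ x in (1 / 2 : ℝ)..1, u x = 0 := by
    rwa [intervalIntegral.integral_add_adjacent_intervals hu_left
      (hright.intervalIntegrable_Icc (by norm_num))]
  have htail := hright.intervalIntegral_le_mul (by norm_num)
  have hcont : ContinuousOn (fun x : ℝ ↦ -log (1 - x)) (Icc 0 (1 / 2)) :=
    continuousOn_neg_log_one_sub.mono fun x hx ↦ hx.2.trans_lt (by norm_num)
  have hlog := hleft.mul_intervalIntegral_le (by norm_num) hcont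
    fun x hx ↦ neg_log_one_sub_nonneg hx.1 (hx.2.trans (by norm_num))
  rw [integral_neg_log_one_sub] at hlog
  have hdecomp : ∫ x in (0 : ℝ)..(1 / 2), u x * (1 - log 2 - log (1 - x)) =
      (1 - log 2) * (∫ x in (0 : ℝ)..(1 / 2), u x) +
        ∫ x in (0 : ℝ)..(1 / 2), u x * -log (1 - x) := by
    rw [← intervalIntegral.integral_const_mul, ← intervalIntegral.integral_add
      (hu_left.const_mul _) (hu_left.mul_continuousOn (by rwa [uIcc_of_le (by norm_num)]))]
    exact intervalIntegral.integral_congr fun x _ ↦ by ring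
  rw [hdecomp]
  nlinarith
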